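/- arXiv:1907.03373 — 3 statements merged into one kernel-verified Lean document; each statement's English description precedes it below -/
import Mathlib

section
/- Let m features be hashed independently and uniformly into n bins, and let 1 ≤ k ≤ m/n. The probability that every bin contains at least k features is at least 1 − C(m, k−1)·(n−1)^(m−k+1)/n^(m−1) · (m−k+2)/(m−nk+n+1). -/
/-!
A hashing fails to fill every bin with `k` features exactly when some bin `b` receives `i < k`
features, so by the union bound at most `n * ∑ i < k, C(m, i) (n - 1)^(m - i)` hashings fail.
Since `C(m, i + 1) (i + 1) = C(m, i) (m - i)`, each term of this sum is at most
`r = (k - 1)(n - 1) / (m - k + 2)` times the next one, and `r < 1` because `n k ≤ m`.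
Summing the geometric series down from the last term bounds the sum by
`C(m, k - 1) (n - 1)^(m - k + 1) / (1 - r)`, and `1 / (1 - r) = (m - k + 2) / (m - n k + n + 1)`.
-/

open Finset

section Fibers

variable {α β : Type*} [Fintype α] [DecidableEq α] [Fintype β] [DecidableEq β]

theorem card_filter_fiber_eq (b : β) (T : Finset α) :
    #{h : α → β | ({a | h a = b} : Finset α) = T}
      = (Fintype.card β - 1) ^ (Fintype.card α - #T) := by
  have hpi : ({h : α → β | ({a | h a = b} : Finset α) = T} : Finset (α → β)) =
      Fintype.piFinset fun a => if a ∈ T then {b} else univ.erase b := by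
    ext h
    simp only [mem_filter, mem_univ, true_and, Fintype.mem_piFinset, Finset.ext_iff]
    refine forall_congr' fun a => ?_
    split_ifs with ha <;> simp [ha]
  simp only [hpi, Fintype.card_piFinset, apply_ite card, card_singleton, prod_ite,
    prod_const_one, one_mul, prod_const, card_erase_of_mem (mem_univ b), card_univ]
  rw [filter_not, card_sdiff_of_subset (filter_subset _ _), filter_mem_eq_inter, univ_inter,
    card_univ]

theorem card_filter_card_fiber_eq (b : β) (i : ℕ) :
    #{h : α → β | #{a | h a = b} = i}
      = (Fintype.card α).choose i * (Fintype.card β - 1) ^ (Fintype.card α - i) := by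
  rw [card_eq_sum_card_fiberwise (f := fun h : α → β => ({a | h a = b} : Finset α))
    (t := powersetCard i univ) fun h hh => by simpa using hh]
  trans ∑ _T ∈ powersetCard i (univ : Finset α), (Fintype.card β - 1) ^ (Fintype.card α - i)
  · refine sum_congr rfl fun T hT => ?_
    rw [mem_powersetCard_univ] at hT
    rw [filter_filter, ← hT, ← card_filter_fiber_eq b T]
    congr 1
    ext h
    simp only [mem_filter, mem_univ, true_and, and_iff_right_iff_imp]
    rintro rfl
    rfl
  · rw [sum_const, card_powersetCard, card_univ, smul_eq_mul]

theorem card_filter_card_fiber_lt (b : β) (k : ℕ) :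
    #{h : α → β | #{a | h a = b} < k}
      = ∑ i ∈ range k, (Fintype.card α).choose i * (Fintype.card β - 1) ^ (Fintype.card α - i) := by
  rw [card_eq_sum_card_fiberwise (f := fun h : α → β => #{a | h a = b}) (t := range k)
    fun h hh => by simpa using hh]
  refine sum_congr rfl fun i hi => ?_
  rw [filter_filter, ← card_filter_card_fiber_eq b i]
  congr 1
  ext h
  simp only [mem_filter, mem_univ, true_and, and_iff_right_iff_imp]
  rintro rfl
  exact mem_range.mp hi

theorem card_filter_exists_card_fiber_lt_le (k : ℕ) :
    #{h : α → β | ∃ b, #{a | h a = b} < k}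
      ≤ Fintype.card β *
        ∑ i ∈ range k, (Fintype.card α).choose i * (Fintype.card β - 1) ^ (Fintype.card α - i) := by
  calc #{h : α → β | ∃ b, #{a | h a = b} < k}
      = #(univ.biUnion fun b => {h : α → β | #{a | h a = b} < k}) := by
        congr 1; ext h; simp
    _ ≤ ∑ b, #{h : α → β | #{a | h a = b} < k} := card_biUnion_le
    _ = _ := by simp only [card_filter_card_fiber_lt, sum_const, card_univ, smul_eq_mul]

theorem card_pow_card_le_natCard_forall_le_card_fiber_add (k : ℕ) :
    Fintype.card β ^ Fintype.card α
      ≤ Nat.card {h : α → β // ∀ b, k ≤ #{a | h a = b}} + Fintype.card β *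
        ∑ i ∈ range k, (Fintype.card α).choose i * (Fintype.card β - 1) ^ (Fintype.card α - i) := by
  rw [Nat.card_eq_fintype_card, Fintype.card_subtype, ← Fintype.card_fun, ← card_univ,
    ← card_filter_add_card_filter_not (fun h : α → β => ∀ b, k ≤ #{a | h a = b})]
  gcongr
  simpa only [not_forall, not_le] using card_filter_exists_card_fiber_lt_le k

end Fibers

theorem sum_range_succ_le_div_one_sub {K : Type*} [Field K] [LinearOrder K] [IsStrictOrderedRing K]
    {t : ℕ → K} {r : K} (hr0 : 0 ≤ r) (hr1 : r < 1) (ht0 : 0 ≤ t 0) (k : ℕ)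
    (hstep : ∀ i < k, t i ≤ r * t (i + 1)) : ∑ i ∈ range (k + 1), t i ≤ t k / (1 - r) := by
  have hpos : 0 < 1 - r := sub_pos.mpr hr1
  induction k with
  | zero =>
    rw [sum_range_one, le_div_iff₀ hpos]
    nlinarith
  | succ k ih =>
    calc ∑ i ∈ range (k + 2), t i ≤ t k / (1 - r) + t (k + 1) := by
          rw [sum_range_succ]
          exact add_le_add_left (ih fun i hi => hstep i (by omega)) _
      _ ≤ r * t (k + 1) / (1 - r) + t (k + 1) := by
          gcongr
          exact hstep k (by omega)
      _ = t (k + 1) / (1 - r) := by field_simp; ring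

theorem choose_mul_pow_mul_sub {R : Type*} [CommRing R] {m i : ℕ} (hi : i < m) (A : R) :
    (m.choose i : R) * A ^ (m - i) * ((m : R) - i)
      = (m.choose (i + 1) : R) * A ^ (m - (i + 1)) * ((i + 1) * A) := by
  have hchoose : ((m.choose (i + 1) * (i + 1) : ℕ) : R) = ((m.choose i * (m - i) : ℕ) : R) :=
    congrArg _ (Nat.choose_succ_right_eq m i)
  have hpow : A ^ (m - i) = A ^ (m - (i + 1)) * A := by
    rw [← pow_succ]; congr 1; omega
  push_cast [Nat.cast_sub hi.le] at hchoose
  rw [hpow]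
  linear_combination (A ^ (m - (i + 1)) * A) * hchoose.symm

theorem sum_range_succ_choose_mul_pow_le {m k : ℕ} {A : ℝ} (hA : 0 ≤ A) (hkm : k ≤ m)
    (hkA : k * A < m - k + 1) :
    ∑ i ∈ range (k + 1), (m.choose i : ℝ) * A ^ (m - i)
      ≤ m.choose k * A ^ (m - k) * ((m - k + 1) / (m - k + 1 - k * A)) := by
  have hD : (0 : ℝ) < m - k + 1 := by
    have : (k : ℝ) ≤ m := by exact_mod_cast hkm
    linarith
  set t : ℕ → ℝ := fun i => m.choose i * A ^ (m - i) with ht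
  have ht_nonneg : ∀ i, 0 ≤ t i := fun i => by positivity
  have hr1 : k * A / (m - k + 1) < 1 := (div_lt_one hD).mpr hkA
  have hstep : ∀ i < k, t i ≤ k * A / (m - k + 1) * t (i + 1) := by
    intro i hi
    have him : (i : ℝ) + 1 ≤ k := by exact_mod_cast hi
    have hmi : (0 : ℝ) < m - i := by linarith
    have hrec : t i * (m - i) = t (i + 1) * ((i + 1) * A) :=
      choose_mul_pow_mul_sub (by omega) A
    -- `k (m - i) - (i + 1) (m - k + 1) = (k - i - 1) (m + 1)`
    have hgap : 0 ≤ t (i + 1) * A * ((k - (i + 1)) * (m + 1)) := by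
      have := ht_nonneg (i + 1)
      have : (0 : ℝ) ≤ k - (i + 1) := by linarith
      positivity
    rw [div_mul_eq_mul_div, le_div_iff₀ hD]
    refine le_of_mul_le_mul_right ?_ hmi
    linear_combination (m - k + 1) * hrec + hgap
  calc ∑ i ∈ range (k + 1), t i ≤ t k / (1 - k * A / (m - k + 1)) :=
        sum_range_succ_le_div_one_sub (by positivity) hr1 (ht_nonneg 0) k hstep
    _ = _ := by
        have : (0 : ℝ) < m - k + 1 - k * A := by linarith
        field_simp
        rfl

theorem stmt_4_general (m n k : ℕ) (hn : 2 ≤ n) (hk : 1 ≤ k) (hkm : n * k ≤ m) :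
    (Nat.card {h : Fin m → Fin n //
        ∀ b : Fin n, k ≤ (Finset.univ.filter (fun j => h j = b)).card} : ℝ) / (n : ℝ) ^ m
      ≥ 1 - (m.choose (k - 1) : ℝ) * ((n : ℝ) - 1) ^ (m - k + 1) / (n : ℝ) ^ (m - 1)
          * (((m : ℝ) - k + 2) / ((m : ℝ) - n * k + n + 1)) := by
  obtain ⟨k, rfl⟩ : ∃ k', k = k' + 1 := ⟨k - 1, by omega⟩
  have hkm' : k < m := by nlinarith
  have hcount := Nat.cast_le (α := ℝ) |>.mpr <|
    card_pow_card_le_natCard_forall_le_card_fiber_add (α := Fin m) (β := Fin n) (k + 1)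
  push_cast [Fintype.card_fin, Nat.cast_sub (show 1 ≤ n by omega)] at hcount
  have htail := sum_range_succ_choose_mul_pow_le (A := (n : ℝ) - 1) (by simp; omega) hkm'.le
    (by have : (n : ℝ) * (k + 1) ≤ m := by exact_mod_cast hkm
        nlinarith)
  have hpow : (n : ℝ) ^ m = (n : ℝ) ^ (m - 1) * n := by
    rw [← pow_succ, Nat.sub_add_cancel (by omega)]
  rw [Nat.add_sub_cancel, show m - (k + 1) + 1 = m - k by omega, ge_iff_le, hpow,
    le_div_iff₀ (by positivity)]
  have hfrac : ((m : ℝ) - ↑(k + 1) + 2) / (m - n * ↑(k + 1) + n + 1)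
      = (m - k + 1) / (m - k + 1 - k * (n - 1)) := by
    push_cast; ring_nf
  have hexpand : ∀ a f : ℝ, (1 - a / (n : ℝ) ^ (m - 1) * f) * ((n : ℝ) ^ (m - 1) * n)
      = (n : ℝ) ^ (m - 1) * n - n * (a * f) := fun a f => by field_simp
  rw [hfrac, hexpand, ← hpow]
  linarith [mul_le_mul_of_nonneg_left htail (Nat.cast_nonneg n)]

/-- With `m` features hashed uniformly into `n` bins and `1 ≤ k ≤ m/n`,
the probability that every bin contains at least `k` features is at least
`1 - C(m,k-1) * (n-1)^(m-k+1)/n^(m-1) * (m-k+2)/(m-nk+n+1)`. -/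
theorem stmt_4 (m n k : ℕ) (hm : 1 ≤ m) (hn : 2 ≤ n) (hk : 1 ≤ k) (hkm : n * k ≤ m) :
    (Nat.card {h : Fin m → Fin n //
        ∀ b : Fin n, k ≤ (Finset.univ.filter (fun j => h j = b)).card} : ℝ) / (n : ℝ) ^ m
      ≥ 1 - (m.choose (k - 1) : ℝ) * ((n : ℝ) - 1) ^ (m - k + 1) / (n : ℝ) ^ (m - 1)
          * (((m : ℝ) - k + 2) / ((m : ℝ) - n * k + n + 1)) :=
  stmt_4_general m n k hn hk hkm
end

section
/- The multinomial coefficient is maximized at the balanced partition: for any s_1, ..., s_d ≥ 0 with ∑ s_i = N, the multinomial coefficient N!/(s_1!⋯s_d!) is at most N!/(⌊N/d⌋!)^d. -/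
/-! With `m = ⌊N/d⌋`, compare each `s!` with `m!` through the single-variable bound
`m! m^s ≤ s! m^m`: the ratio `s!/m!` is a product of `|s - m|` factors, each at least `m`
when `s ≥ m` and each at most `m` when `s ≤ m`. Multiplying over the parts, the surplus
`m^(∑ s_i)` on the left dominates `m^(m d)` on the right because `∑ s_i = N ≥ m d`. -/

open Finset Nat

theorem Nat.factorial_mul_pow_le_factorial_mul_pow (m k : ℕ) : m ! * m ^ k ≤ k ! * m ^ m := by
  rcases le_total m k with hmk | hkm
  · calc m ! * m ^ k = m ! * m ^ (k - m) * m ^ m := by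
          rw [mul_assoc, ← pow_add, Nat.sub_add_cancel hmk]
      _ ≤ k ! * m ^ m := Nat.mul_le_mul_right _ (factorial_mul_pow_sub_le_factorial hmk)
  · calc m ! * m ^ k = k ! * m.descFactorial (m - k) * m ^ k := by
          rw [← factorial_mul_descFactorial (Nat.sub_le m k), Nat.sub_sub_self hkm]
      _ ≤ k ! * m ^ (m - k) * m ^ k := by gcongr; exact descFactorial_le_pow m _
      _ = k ! * m ^ m := by rw [mul_assoc, ← pow_add, Nat.sub_add_cancel hkm]

theorem Nat.factorial_pow_card_le_prod_factorial {ι : Type*} (t : Finset ι) (s : ι → ℕ) {m : ℕ}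
    (hsum : m * #t ≤ ∑ i ∈ t, s i) : m ! ^ #t ≤ ∏ i ∈ t, (s i)! := by
  rcases Nat.eq_zero_or_pos m with rfl | hm
  · simpa [Nat.one_le_iff_ne_zero] using
      prod_ne_zero_iff.mpr fun i _ => factorial_ne_zero (s i)
  have hprod : m ! ^ #t * m ^ (∑ i ∈ t, s i) ≤ (∏ i ∈ t, (s i)!) * m ^ (m * #t) := by
    simpa only [prod_mul_distrib, prod_const, prod_pow_eq_pow_sum, pow_mul] using
      prod_le_prod' fun i _ => factorial_mul_pow_le_factorial_mul_pow m (s i)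
  refine Nat.le_of_mul_le_mul_right ?_ (pow_pos hm (m * #t))
  calc m ! ^ #t * m ^ (m * #t) ≤ m ! ^ #t * m ^ (∑ i ∈ t, s i) := by gcongr
    _ ≤ (∏ i ∈ t, (s i)!) * m ^ (m * #t) := hprod

theorem stmt_11_general (N d : ℕ)
    (s : Fin d → ℕ) (hs : ∑ i, s i = N) :
    (N.factorial : ℝ) / (∏ i, ((s i).factorial : ℝ))
      ≤ (N.factorial : ℝ) / ((N / d).factorial : ℝ) ^ d := by
  have key : (N / d)! ^ d ≤ ∏ i, (s i)! := by
    simpa using factorial_pow_card_le_prod_factorial univ s (m := N / d)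
      (by simpa [hs] using Nat.div_mul_le_self N d)
  apply div_le_div_of_nonneg_left (by positivity) (by positivity)
  exact_mod_cast key

/-- The multinomial coefficient is maximized at the balanced
partition: for nonnegative `s_1,…,s_d` summing to `N`,
`N!/(s_1!⋯s_d!) ≤ N!/(⌊N/d⌋!)^d`. -/
theorem stmt_11 (N d : ℕ) (hN : 1 ≤ N) (hd : 1 ≤ d)
    (s : Fin d → ℕ) (hs : ∑ i, s i = N) :
    (N.factorial : ℝ) / (∏ i, ((s i).factorial : ℝ))
      ≤ (N.factorial : ℝ) / ((N / d).factorial : ℝ) ^ d :=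
  stmt_11_general N d s hs
end

section
/- Under the setup of the splitting privacy lemma, the absolute difference between Pr[∑_{m=1}^M X^{mk} = s^k for all k = 1..K] (world 1: all M users random) and Pr[∑_{m=1}^{M−1} X^{mk} + v^k = s^k for all k] (world 2: M−1 random users plus a fixed user with known update vectors v^k, ‖v^k‖₁ = F, v^k ≥ 0) is at most max{p(M, F, d), p(M−1, F, d)}^K, where p(m,f,d) = (mf)!/((⌊mf/d⌋!)^d · d^(mf)). -/
/-!
Both probabilities factor over the `K` rounds. In a round, the event is that a uniformly random map
from the `n = MF` (resp. `(M-1)F`) one-hot draws to `Fin d` has prescribed fiber sizes `t`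
(`t = s^k`, resp. `t = s^k - v^k`). There are at most `n! / ∏ tᵢ!` such maps, and a product of
factorials with fixed sum `n` is at least `(⌊n/d⌋!)^d`, so the round has probability at most
`p(M, F, d)`, resp. `p(M-1, F, d)`. Finally, two numbers in `[0, x]` differ by at most `x`.
-/

open Finset
open scoped Nat

namespace Nat

theorem factorial_mul_pow_sub_le_factorial_mul_pow_sub (q t : ℕ) :
    q ! * q ^ (t - q) ≤ t ! * q ^ (q - t) := by
  rcases le_total q t with h | h
  · simpa [Nat.sub_eq_zero_of_le h] using factorial_mul_pow_sub_le_factorial h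
  · obtain ⟨k, rfl⟩ := Nat.exists_eq_add_of_le h
    rw [Nat.sub_eq_zero_of_le h, pow_zero, mul_one, Nat.add_sub_cancel_left,
      ← factorial_mul_ascFactorial]
    exact Nat.mul_le_mul_left _ (ascFactorial_le_pow_add t k)

theorem factorial_div_card_pow_le_prod_factorial {ι : Type*} [Fintype ι] (t : ι → ℕ) :
    ((∑ i, t i) / Fintype.card ι)! ^ Fintype.card ι ≤ ∏ i, (t i)! := by
  set q := (∑ i, t i) / Fintype.card ι
  obtain hq | hq := Nat.eq_zero_or_pos q
  · rw [hq, factorial_zero, one_pow]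
    exact one_le_prod' fun i _ => factorial_pos _
  have hdeficit_le_excess : ∑ i, (q - t i) ≤ ∑ i, (t i - q) := by
    have hle : q * Fintype.card ι ≤ ∑ i, t i := Nat.div_mul_le_self _ _
    have hbalance : ∑ i, (q - t i) + ∑ i, t i = ∑ i, (t i - q) + q * Fintype.card ι := by
      rw [← sum_add_distrib, sum_congr rfl fun i _ => show q - t i + t i = t i - q + q by omega,
        sum_add_distrib, sum_const, Finset.card_univ, smul_eq_mul, mul_comm]
    omega
  have hprod :
      q ! ^ Fintype.card ι * q ^ ∑ i, (t i - q) ≤ (∏ i, (t i)!) * q ^ ∑ i, (q - t i) := by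
    have := prod_le_prod' fun i (_ : i ∈ univ) =>
      factorial_mul_pow_sub_le_factorial_mul_pow_sub q (t i)
    rwa [prod_mul_distrib, prod_mul_distrib, prod_const, prod_pow_eq_pow_sum,
      prod_pow_eq_pow_sum, Finset.card_univ] at this
  refine Nat.le_of_mul_le_mul_right (hprod.trans' ?_) (pow_pos hq (∑ i, (q - t i)))
  exact Nat.mul_le_mul_left _ (Nat.pow_le_pow_right hq hdeficit_le_excess)

end Nat

section FiberCards

variable {α β : Type*} [Fintype α] [Fintype β] [DecidableEq β]

theorem card_fiberCard_mul_prod_factorial_le (t : β → ℕ) (ht : ∑ i, t i = Fintype.card α) :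
    Nat.card {g : α → β // ∀ i, #{a | g a = i} = t i} * ∏ i, (t i)! ≤
      (Fintype.card α)! := by
  classical
  let S := {g : α → β // ∀ i, #{a | g a = i} = t i}
  let fiberEquiv (g : S) (i : β) : {a // g.1 a = i} ≃ Fin (t i) :=
    Fintype.equivFinOfCardEq (by rw [Fintype.card_subtype]; exact g.2 i)
  -- `(g, σ)` labels the fiber of `g` over `i` by `Fin (t i)`, twisted by `σ i`.
  let label (x : S × ∀ i, Equiv.Perm (Fin (t i))) : α ≃ Σ i, Fin (t i) :=
    (Equiv.sigmaFiberEquiv x.1.1).symm.trans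
      (Equiv.sigmaCongrRight fun i => (fiberEquiv x.1 i).trans (x.2 i))
  have label_apply (g : S) (σ : ∀ i, Equiv.Perm (Fin (t i))) (a : α) :
      label (g, σ) a = ⟨g.1 a, σ (g.1 a) (fiberEquiv g (g.1 a) ⟨a, rfl⟩)⟩ := rfl
  have label_injective : Function.Injective label := by
    rintro ⟨g, σ⟩ ⟨g', σ'⟩ h
    obtain rfl : g = g' := Subtype.ext <| funext fun a => by
      simpa only [label_apply] using congrArg Sigma.fst (DFunLike.congr_fun h a)
    congr 1
    funext i
    ext x
    obtain ⟨⟨a, rfl⟩, rfl⟩ := (fiberEquiv g i).surjective x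
    have := DFunLike.congr_fun h a
    rw [label_apply, label_apply] at this
    exact congrArg Fin.val (eq_of_heq (Sigma.mk.inj_iff.mp this).2)
  have hcard := Fintype.card_le_of_injective label label_injective
  rw [Fintype.card_prod, Fintype.card_pi, Fintype.card_equiv
    (Fintype.equivOfCardEq (by simp [Fintype.card_sigma, ht]))] at hcard
  simpa only [Fintype.card_perm, Fintype.card_fin, Nat.card_eq_fintype_card] using hcard

theorem card_fiberCard_mul_factorial_pow_le (t : β → ℕ) :
    Nat.card {g : α → β // ∀ i, #{a | g a = i} = t i} *
      (Fintype.card α / Fintype.card β)! ^ Fintype.card β ≤ (Fintype.card α)! := by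
  rcases isEmpty_or_nonempty {g : α → β // ∀ i, #{a | g a = i} = t i} with _ | ⟨g, hg⟩
  · simp
  have ht : ∑ i, t i = Fintype.card α := by
    simp_rw [← hg]
    exact (card_eq_sum_card_fiberwise fun a _ => mem_univ (g a)).symm
  calc _ ≤ Nat.card {g : α → β // ∀ i, #{a | g a = i} = t i} * ∏ i, (t i)! := by
        rw [← ht]
        exact Nat.mul_le_mul_left _ (Nat.factorial_div_card_pow_le_prod_factorial t)
    _ ≤ (Fintype.card α)! := card_fiberCard_mul_prod_factorial_le t ht

theorem card_fiberCard_add_le (v s : β → ℕ) :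
    Nat.card {g : α → β // ∀ i, #{a | g a = i} + v i = s i} ≤
      Nat.card {g : α → β // ∀ i, #{a | g a = i} = s i - v i} :=
  Nat.card_le_card_of_injective (Subtype.map id fun g hg i => by simp [← hg i])
    (Subtype.map_injective _ Function.injective_id)

theorem card_fiberCard_div_pow_le (t : β → ℕ) :
    (Nat.card {g : α → β // ∀ i, #{a | g a = i} = t i} : ℝ) /
        (Fintype.card β : ℝ) ^ Fintype.card α ≤
      ((Fintype.card α)! : ℝ) / (((Fintype.card α / Fintype.card β)! : ℝ) ^ Fintype.card β *
        (Fintype.card β : ℝ) ^ Fintype.card α) := by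
  rw [← div_div]
  refine div_le_div_of_nonneg_right ((le_div_iff₀ (by positivity)).mpr ?_) (by positivity)
  exact_mod_cast card_fiberCard_mul_factorial_pow_le t

theorem card_fiberCard_add_div_pow_le (v s : β → ℕ) :
    (Nat.card {g : α → β // ∀ i, #{a | g a = i} + v i = s i} : ℝ) /
        (Fintype.card β : ℝ) ^ Fintype.card α ≤
      ((Fintype.card α)! : ℝ) / (((Fintype.card α / Fintype.card β)! : ℝ) ^ Fintype.card β *
        (Fintype.card β : ℝ) ^ Fintype.card α) :=
  (div_le_div_of_nonneg_right (by exact_mod_cast card_fiberCard_add_le v s)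
    (by positivity)).trans (card_fiberCard_div_pow_le (s - v))

end FiberCards

theorem card_subtype_pi_div_pow_le {ι γ : Type*} [Fintype ι] (P : ι → γ → Prop) {D p : ℝ}
    (hD : 0 ≤ D) (n : ℕ) (h : ∀ k, (Nat.card {b // P k b} : ℝ) / D ^ n ≤ p) :
    (Nat.card {g : ι → γ // ∀ k, P k (g k)} : ℝ) / D ^ (n * Fintype.card ι) ≤
      p ^ Fintype.card ι := by
  rw [Nat.card_congr Equiv.subtypePiEquivPi, Nat.card_pi, Nat.cast_prod, pow_mul,
    ← Finset.card_univ, ← prod_const, ← prod_div_distrib]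
  exact (prod_le_prod (fun _ _ => by positivity) fun k _ => h k).trans_eq (prod_const p)

theorem stmt_13_general (M F d K : ℕ) (v s : Fin K → Fin d → ℕ) :
    |(Nat.card {g : Fin K → Fin M × Fin F → Fin d //
          ∀ k i, (Finset.univ.filter (fun p => g k p = i)).card = s k i} : ℝ)
          / (d : ℝ) ^ (M * F * K)
      - (Nat.card {g : Fin K → Fin (M - 1) × Fin F → Fin d //
          ∀ k i, (Finset.univ.filter (fun p => g k p = i)).card + v k i = s k i} : ℝ)
          / (d : ℝ) ^ ((M - 1) * F * K)|
      ≤ (max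
          (((M * F).factorial : ℝ)
            / (((M * F / d).factorial : ℝ) ^ d * (d : ℝ) ^ (M * F)))
          ((((M - 1) * F).factorial : ℝ)
            / ((((M - 1) * F / d).factorial : ℝ) ^ d * (d : ℝ) ^ ((M - 1) * F)))) ^ K := by
  have hworld1 := card_subtype_pi_div_pow_le
    (fun (k : Fin K) (b : Fin M × Fin F → Fin d) => ∀ i, #{p | b p = i} = s k i)
    d.cast_nonneg (M * F) fun k => by
      simpa only [Fintype.card_prod, Fintype.card_fin] using
        card_fiberCard_div_pow_le (α := Fin M × Fin F) (s k)
  have hworld2 := card_subtype_pi_div_pow_le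
    (fun (k : Fin K) (b : Fin (M - 1) × Fin F → Fin d) => ∀ i, #{p | b p = i} + v k i = s k i)
    d.cast_nonneg ((M - 1) * F) fun k => by
      simpa only [Fintype.card_prod, Fintype.card_fin] using
        card_fiberCard_add_div_pow_le (α := Fin (M - 1) × Fin F) (v k) (s k)
  rw [Fintype.card_fin] at hworld1 hworld2
  refine abs_sub_le_of_nonneg_of_le (by positivity) ?_ (by positivity) ?_
  · exact hworld1.trans (pow_le_pow_left₀ (by positivity) (le_max_left _ _) K)
  · exact hworld2.trans (pow_le_pow_left₀ (by positivity) (le_max_right _ _) K)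

/-- splitting privacy lemma: the absolute difference between the
probability (world 1) that the sums of all `M` users' random one-hot updates equal
`s^k` in every iteration `k`, and the probability (world 2) that the sums of `M-1`
random users' updates plus the fixed user's known updates `v^k` (with `‖v^k‖₁ = F`)
equal `s^k` in every iteration, is at most `max{p(M,F,d), p(M-1,F,d)}^K`, where
`p(m,f,d) = (mf)!/((⌊mf/d⌋!)^d * d^(mf))`. -/
theorem stmt_13 (M F d K : ℕ) (hM : 2 ≤ M) (hF : 1 ≤ F) (hd : 1 ≤ d) (hK : 1 ≤ K)
    (v s : Fin K → Fin d → ℕ) (hv : ∀ k, ∑ i, v k i = F) (hs : ∀ k, ∑ i, s k i = M * F) :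
    |(Nat.card {g : Fin K → Fin M × Fin F → Fin d //
          ∀ k i, (Finset.univ.filter (fun p => g k p = i)).card = s k i} : ℝ)
          / (d : ℝ) ^ (M * F * K)
      - (Nat.card {g : Fin K → Fin (M - 1) × Fin F → Fin d //
          ∀ k i, (Finset.univ.filter (fun p => g k p = i)).card + v k i = s k i} : ℝ)
          / (d : ℝ) ^ ((M - 1) * F * K)|
      ≤ (max
          (((M * F).factorial : ℝ)
            / (((M * F / d).factorial : ℝ) ^ d * (d : ℝ) ^ (M * F)))
          ((((M - 1) * F).factorial : ℝ)
            / ((((M - 1) * F / d).factorial : ℝ) ^ d * (d : ℝ) ^ ((M - 1) * F)))) ^ K :=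
  stmt_13_general M F d K v s
end
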